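/- arXiv:1702.03910 — 3 statements merged into one kernel-verified Lean document; each statement's English description precedes it below -/
import Mathlib

section
/- Let N be a positive integer, λ > 0, and w_1, …, w_N ∈ ℂ such that for every permutation σ of {1,…,N} and every 1 ≤ k ≤ N we have w_{σ(1)} + … + w_{σ(k)} + λ ≠ 0, and w_l + λ ≠ 0 for all l. Then Σ_{σ ∈ S_N} sgn(σ) Π_{k=1}^{N} w_{σ(k)}^{k} / ( w_{σ(1)} + … + w_{σ(k)} + λ ) = det_{1≤k,l≤N} [ w_l^{k} / ( w_l + λ ) ]. -/
open Finset

set_option maxRecDepth 8000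

namespace SumPermDetAux

variable {N : ℕ}

/-- partial sum `w (σ 0) + … + w (σ k)`. -/
noncomputable def Sp (w : Fin N → ℂ) (σ : Equiv.Perm (Fin N)) (k : Fin N) : ℂ :=
  ∑ j ∈ Finset.Iic k, w (σ j)

/-- interpolating family: first `m` denominators are `w+λ`, the rest partial sums. -/
noncomputable def Fm (lam : ℝ) (w : Fin N → ℂ) (m : ℕ) : ℂ :=
  ∑ σ : Equiv.Perm (Fin N), ((Equiv.Perm.sign σ : ℤ) : ℂ) *
    ∏ k : Fin N,
      if (k : ℕ) < m then w (σ k) ^ ((k : ℕ) + 1) / (w (σ k) + (lam : ℂ))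
      else w (σ k) ^ ((k : ℕ) + 1) / (Sp w σ k + (lam : ℂ))

lemma swap_mem_Iic {i i' k : Fin N} (hi : i ≤ k) (hi' : i' ≤ k) (j : Fin N) :
    j ∈ Iic k ↔ Equiv.swap i i' j ∈ Iic k := by
  rcases eq_or_ne j i with rfl | hji
  · simp [Equiv.swap_apply_left, hi, hi']
  rcases eq_or_ne j i' with rfl | hji'
  · simp [Equiv.swap_apply_right, hi, hi']
  · rw [Equiv.swap_apply_of_ne_of_ne hji hji']

lemma Sp_mul_swap (w : Fin N → ℂ) (σ : Equiv.Perm (Fin N)) {i i' k : Fin N}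
    (hi : i ≤ k) (hi' : i' ≤ k) :
    Sp w (σ * Equiv.swap i i') k = Sp w σ k := by
  unfold Sp
  exact Finset.sum_equiv (Equiv.swap i i') (swap_mem_Iic hi hi') (fun j _ => rfl)

/-- the key vanishing lemma. -/
lemma sum_T_zero (lam : ℝ) (w : Fin N → ℂ) (m i : Fin N) (him : i < m) :
    ∑ σ : Equiv.Perm (Fin N), ((Equiv.Perm.sign σ : ℤ) : ℂ) *
      ((∏ k ∈ Iic m, w (σ k) ^ (if k = i then (k : ℕ) + 2 else (k : ℕ) + 1) *
          (w (σ k) + (lam : ℂ))⁻¹) *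
       ((Sp w σ m + (lam : ℂ))⁻¹ *
        ∏ k ∈ Ioi m, w (σ k) ^ ((k : ℕ) + 1) * (Sp w σ k + (lam : ℂ))⁻¹)) = 0 := by
  have hi'N : (i : ℕ) + 1 < N := lt_of_le_of_lt (Nat.succ_le_of_lt him) m.isLt
  set i' : Fin N := ⟨(i : ℕ) + 1, hi'N⟩ with hi'def
  have hii' : i ≠ i' := by
    intro h
    have : (i : ℕ) = (i : ℕ) + 1 := congrArg Fin.val h
    omega
  have hi'm : i' ≤ m := by
    rw [Fin.le_def]
    exact Nat.succ_le_of_lt him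
  have him' : i ≤ m := le_of_lt him
  set s : Equiv.Perm (Fin N) := Equiv.swap i i' with hsdef
  set E : Fin N → ℕ := fun k => if k = i then (k : ℕ) + 2 else (k : ℕ) + 1 with hEdef
  have hEi : E i = (i : ℕ) + 2 := if_pos rfl
  have hEi' : E i' = (i' : ℕ) + 1 := if_neg (Ne.symm hii')
  have hEk : ∀ k, k ≠ i → E k = (k : ℕ) + 1 := fun k h => if_neg h
  have hE : ∀ k, E (s k) = E k := by
    intro k
    rcases eq_or_ne k i with rfl | hki
    · rw [show s k = i' from Equiv.swap_apply_left k i', hEi', hEi]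
      try simp [hi'def]
    rcases eq_or_ne k i' with rfl | hk2
    · rw [show s i' = i from Equiv.swap_apply_right i i', hEi, hEi']
      try simp [hi'def]
    · rw [hsdef, Equiv.swap_apply_of_ne_of_ne hki hk2]
  set T : Equiv.Perm (Fin N) → ℂ := fun σ =>
      ((Equiv.Perm.sign σ : ℤ) : ℂ) *
      ((∏ k ∈ Iic m, w (σ k) ^ (E k) * (w (σ k) + (lam : ℂ))⁻¹) *
       ((Sp w σ m + (lam : ℂ))⁻¹ *
        ∏ k ∈ Ioi m, w (σ k) ^ ((k : ℕ) + 1) * (Sp w σ k + (lam : ℂ))⁻¹)) with hTdef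
  have key : ∀ σ, T (σ * s) = - T σ := by
    intro σ
    have hsign : ((Equiv.Perm.sign (σ * s) : ℤ) : ℂ) = -((Equiv.Perm.sign σ : ℤ) : ℂ) := by
      rw [Equiv.Perm.sign_mul, hsdef, Equiv.Perm.sign_swap hii']
      push_cast
      ring
    have h1 : (∏ k ∈ Iic m, w ((σ * s) k) ^ (E k) * (w ((σ * s) k) + (lam : ℂ))⁻¹) =
        ∏ k ∈ Iic m, w (σ k) ^ (E k) * (w (σ k) + (lam : ℂ))⁻¹ := by
      refine Finset.prod_equiv s (swap_mem_Iic him' hi'm) (fun k _ => ?_)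
      have : (σ * s) k = σ (s k) := rfl
      rw [this, hE k]
    have h2 : ∀ k, m ≤ k → Sp w (σ * s) k = Sp w σ k := fun k hk =>
      Sp_mul_swap w σ (le_trans him' hk) (le_trans hi'm hk)
    have h3 : (∏ k ∈ Ioi m, w ((σ * s) k) ^ ((k : ℕ) + 1) * (Sp w (σ * s) k + (lam : ℂ))⁻¹) =
        ∏ k ∈ Ioi m, w (σ k) ^ ((k : ℕ) + 1) * (Sp w σ k + (lam : ℂ))⁻¹ := by
      refine Finset.prod_congr rfl (fun k hk => ?_)
      have hmk : m < k := by simpa using hk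
      have hski : s k = k := by
        rw [hsdef]
        exact Equiv.swap_apply_of_ne_of_ne
          (fun h => absurd (h ▸ hmk) (not_lt.2 him'))
          (fun h => absurd (h ▸ hmk) (not_lt.2 hi'm))
      have : (σ * s) k = σ k := by rw [Equiv.Perm.mul_apply, hski]
      rw [this, h2 k (le_of_lt hmk)]
    rw [hTdef]
    simp only
    rw [hsign, h1, h3, h2 m le_rfl]
    ring
  have hsum : ∑ σ : Equiv.Perm (Fin N), T σ = - ∑ σ : Equiv.Perm (Fin N), T σ := by
    calc ∑ σ : Equiv.Perm (Fin N), T σ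
        = ∑ σ : Equiv.Perm (Fin N), T (σ * s) :=
          (Fintype.sum_equiv (Equiv.mulRight s) (fun σ => T (σ * s)) T (fun σ => rfl)).symm
      _ = ∑ σ : Equiv.Perm (Fin N), - T σ := by
          exact Finset.sum_congr rfl (fun σ _ => key σ)
      _ = - ∑ σ : Equiv.Perm (Fin N), T σ := by rw [Finset.sum_neg_distrib]
  have : (∑ σ : Equiv.Perm (Fin N), T σ) + ∑ σ : Equiv.Perm (Fin N), T σ = 0 := by
    nth_rewrite 1 [hsum]; ring
  exact add_self_eq_zero.mp this

lemma Fm_step (lam : ℝ) (w : Fin N → ℂ)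
    (hpart : ∀ σ : Equiv.Perm (Fin N), ∀ k : Fin N,
      (∑ j ∈ Finset.Iic k, w (σ j)) + (lam : ℂ) ≠ 0)
    (hl : ∀ l : Fin N, w l + (lam : ℂ) ≠ 0) (m : Fin N) :
    Fm lam w ((m : ℕ) + 1) = Fm lam w (m : ℕ) := by
  set R : Equiv.Perm (Fin N) → ℂ := fun σ =>
    ∏ k ∈ univ.erase m,
      if (k : ℕ) < (m : ℕ) then w (σ k) ^ ((k : ℕ) + 1) / (w (σ k) + (lam : ℂ))
      else w (σ k) ^ ((k : ℕ) + 1) / (Sp w σ k + (lam : ℂ)) with hRdef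
  have h_erase : (univ : Finset (Fin N)).erase m = Iio m ∪ Ioi m := by
    ext k
    simp only [Finset.mem_erase, Finset.mem_union, Finset.mem_Iio, Finset.mem_Ioi,
      Finset.mem_univ, and_true]
    exact ne_iff_lt_or_gt
  have hdisj : Disjoint (Iio m) (Ioi m) := by
    rw [Finset.disjoint_left]
    intro k h1 h2
    exact absurd (mem_Iio.mp h1) (not_lt.mpr (le_of_lt (mem_Ioi.mp h2)))
  have hR : ∀ σ, R σ =
      (∏ k ∈ Iio m, w (σ k) ^ ((k : ℕ) + 1) * (w (σ k) + (lam : ℂ))⁻¹) *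
      ∏ k ∈ Ioi m, w (σ k) ^ ((k : ℕ) + 1) * (Sp w σ k + (lam : ℂ))⁻¹ := by
    intro σ
    rw [hRdef]
    simp only
    rw [h_erase, Finset.prod_union hdisj]
    congr 1
    · refine Finset.prod_congr rfl (fun k hk => ?_)
      rw [if_pos (Fin.lt_def.mp (mem_Iio.mp hk)), div_eq_mul_inv]
    · refine Finset.prod_congr rfl (fun k hk => ?_)
      have : ¬ ((k : ℕ) < (m : ℕ)) := not_lt.mpr (le_of_lt (Fin.lt_def.mp (mem_Ioi.mp hk)))
      rw [if_neg this, div_eq_mul_inv]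
  have hsplit1 : ∀ σ : Equiv.Perm (Fin N),
      (∏ k : Fin N, if (k : ℕ) < (m : ℕ) + 1 then w (σ k) ^ ((k : ℕ) + 1) / (w (σ k) + (lam : ℂ))
        else w (σ k) ^ ((k : ℕ) + 1) / (Sp w σ k + (lam : ℂ))) =
      (w (σ m) ^ ((m : ℕ) + 1) / (w (σ m) + (lam : ℂ))) * R σ := by
    intro σ
    rw [← Finset.mul_prod_erase univ _ (mem_univ m), if_pos (Nat.lt_succ_self _), hRdef]
    congr 1
    refine Finset.prod_congr rfl (fun k hk => ?_)
    have hkm : (k : ℕ) ≠ (m : ℕ) := fun h => (Finset.mem_erase.mp hk).1 (Fin.ext h)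
    by_cases hlt : (k : ℕ) < (m : ℕ)
    · rw [if_pos hlt, if_pos (by omega)]
    · rw [if_neg hlt, if_neg (by omega)]
  have hsplit2 : ∀ σ : Equiv.Perm (Fin N),
      (∏ k : Fin N, if (k : ℕ) < (m : ℕ) then w (σ k) ^ ((k : ℕ) + 1) / (w (σ k) + (lam : ℂ))
        else w (σ k) ^ ((k : ℕ) + 1) / (Sp w σ k + (lam : ℂ))) =
      (w (σ m) ^ ((m : ℕ) + 1) / (Sp w σ m + (lam : ℂ))) * R σ := by
    intro σ
    rw [← Finset.mul_prod_erase univ _ (mem_univ m), if_neg (lt_irrefl (m : ℕ)), hRdef]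
  have hAB : ∀ σ : Equiv.Perm (Fin N),
      w (σ m) ^ ((m : ℕ) + 1) / (w (σ m) + (lam : ℂ)) -
        w (σ m) ^ ((m : ℕ) + 1) / (Sp w σ m + (lam : ℂ)) =
      ∑ j ∈ Iio m, w (σ j) * (w (σ m) ^ ((m : ℕ) + 1) *
        ((w (σ m) + (lam : ℂ))⁻¹ * (Sp w σ m + (lam : ℂ))⁻¹)) := by
    intro σ
    have hS : Sp w σ m = w (σ m) + ∑ j ∈ Iio m, w (σ j) := by
      rw [Sp, ← Finset.Iio_insert m, Finset.sum_insert (by simp)]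
    have h1 := hl (σ m)
    have h2 : Sp w σ m + (lam : ℂ) ≠ 0 := hpart σ m
    rw [hS] at h2
    rw [← Finset.sum_mul, hS]
    field_simp
    ring
  have hIic : ∀ j, j < m → ∀ σ : Equiv.Perm (Fin N),
      (∏ k ∈ Iic m, w (σ k) ^ (if k = j then (k : ℕ) + 2 else (k : ℕ) + 1) *
        (w (σ k) + (lam : ℂ))⁻¹) =
      (w (σ m) ^ ((m : ℕ) + 1) * (w (σ m) + (lam : ℂ))⁻¹) *
        (w (σ j) * ∏ k ∈ Iio m, w (σ k) ^ ((k : ℕ) + 1) * (w (σ k) + (lam : ℂ))⁻¹) := by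
    intro j hjm σ
    rw [← Finset.Iio_insert m, Finset.prod_insert (by simp), if_neg (ne_of_gt hjm)]
    have hptw : ∀ k ∈ Iio m,
        w (σ k) ^ (if k = j then (k : ℕ) + 2 else (k : ℕ) + 1) * (w (σ k) + (lam : ℂ))⁻¹ =
        (if k = j then w (σ k) else 1) *
          (w (σ k) ^ ((k : ℕ) + 1) * (w (σ k) + (lam : ℂ))⁻¹) := by
      intro k _
      by_cases h : k = j
      · rw [if_pos h, if_pos h, pow_succ]
        ring
      · rw [if_neg h, if_neg h, one_mul]
    rw [Finset.prod_congr rfl hptw, Finset.prod_mul_distrib,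
      Finset.prod_ite_eq' (Iio m) j (fun k => w (σ k)), if_pos (mem_Iio.mpr hjm)]
    try ring
  have main : Fm lam w ((m : ℕ) + 1) - Fm lam w (m : ℕ) = 0 := by
    rw [Fm, Fm, ← Finset.sum_sub_distrib]
    have hterm : ∀ σ : Equiv.Perm (Fin N),
        ((Equiv.Perm.sign σ : ℤ) : ℂ) *
          (∏ k : Fin N, if (k : ℕ) < (m : ℕ) + 1 then
            w (σ k) ^ ((k : ℕ) + 1) / (w (σ k) + (lam : ℂ))
            else w (σ k) ^ ((k : ℕ) + 1) / (Sp w σ k + (lam : ℂ))) -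
        ((Equiv.Perm.sign σ : ℤ) : ℂ) *
          (∏ k : Fin N, if (k : ℕ) < (m : ℕ) then
            w (σ k) ^ ((k : ℕ) + 1) / (w (σ k) + (lam : ℂ))
            else w (σ k) ^ ((k : ℕ) + 1) / (Sp w σ k + (lam : ℂ))) =
        ∑ j ∈ Iio m, ((Equiv.Perm.sign σ : ℤ) : ℂ) *
          ((∏ k ∈ Iic m, w (σ k) ^ (if k = j then (k : ℕ) + 2 else (k : ℕ) + 1) *
              (w (σ k) + (lam : ℂ))⁻¹) *
           ((Sp w σ m + (lam : ℂ))⁻¹ *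
            ∏ k ∈ Ioi m, w (σ k) ^ ((k : ℕ) + 1) * (Sp w σ k + (lam : ℂ))⁻¹)) := by
      intro σ
      rw [hsplit1 σ, hsplit2 σ, ← mul_sub, ← sub_mul, hAB σ, Finset.sum_mul,
        Finset.mul_sum]
      refine Finset.sum_congr rfl (fun j hj => ?_)
      rw [hIic j (mem_Iio.mp hj) σ, hR σ]
      ring
    rw [Finset.sum_congr rfl (fun σ _ => hterm σ), Finset.sum_comm]
    rw [Finset.sum_congr rfl (fun j hj => sum_T_zero lam w m j (mem_Iio.mp hj))]
    simp
  exact sub_eq_zero.mp main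

end SumPermDetAux


open SumPermDetAux in
/-- the determinantal identity
`∑_σ sgn(σ) ∏_{k=1}^N w_{σ(k)}^k / (w_{σ(1)} + … + w_{σ(k)} + λ)
  = det [ w_l^k / (w_l + λ) ]`. -/
theorem sum_perm_det_identity (N : ℕ) (hN : 0 < N) (lam : ℝ) (hlam : 0 < lam)
    (w : Fin N → ℂ)
    (hpart : ∀ σ : Equiv.Perm (Fin N), ∀ k : Fin N,
      (∑ j ∈ Finset.Iic k, w (σ j)) + (lam : ℂ) ≠ 0)
    (hl : ∀ l : Fin N, w l + (lam : ℂ) ≠ 0) :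
    ∑ σ : Equiv.Perm (Fin N), ((Equiv.Perm.sign σ : ℤ) : ℂ) *
        ∏ k : Fin N, w (σ k) ^ ((k : ℕ) + 1) /
          ((∑ j ∈ Finset.Iic k, w (σ j)) + (lam : ℂ)) =
      Matrix.det (Matrix.of fun k l : Fin N =>
        w l ^ ((k : ℕ) + 1) / (w l + (lam : ℂ))) := by
  have h0 : (∑ σ : Equiv.Perm (Fin N), ((Equiv.Perm.sign σ : ℤ) : ℂ) *
        ∏ k : Fin N, w (σ k) ^ ((k : ℕ) + 1) /
          ((∑ j ∈ Finset.Iic k, w (σ j)) + (lam : ℂ))) = Fm lam w 0 := by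
    rw [Fm]
    refine Finset.sum_congr rfl (fun σ _ => ?_)
    have : (∏ k : Fin N,
        if (k : ℕ) < 0 then w (σ k) ^ ((k : ℕ) + 1) / (w (σ k) + (lam : ℂ))
        else w (σ k) ^ ((k : ℕ) + 1) / (Sp w σ k + (lam : ℂ))) =
        ∏ k : Fin N, w (σ k) ^ ((k : ℕ) + 1) / (Sp w σ k + (lam : ℂ)) :=
      Finset.prod_congr rfl (fun k _ => if_neg (Nat.not_lt_zero _))
    rw [this]
    rfl
  have hdet : Matrix.det (Matrix.of fun k l : Fin N =>
      w l ^ ((k : ℕ) + 1) / (w l + (lam : ℂ))) = Fm lam w N := by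
    rw [← Matrix.det_transpose, Matrix.det_apply', Fm]
    refine Finset.sum_congr rfl (fun σ _ => ?_)
    have : (∏ k : Fin N,
        if (k : ℕ) < N then w (σ k) ^ ((k : ℕ) + 1) / (w (σ k) + (lam : ℂ))
        else w (σ k) ^ ((k : ℕ) + 1) / (Sp w σ k + (lam : ℂ))) =
        ∏ k : Fin N, w (σ k) ^ ((k : ℕ) + 1) / (w (σ k) + (lam : ℂ)) :=
      Finset.prod_congr rfl (fun k _ => if_pos k.isLt)
    rw [this]
    rfl
  have chain : ∀ n, n ≤ N → Fm lam w 0 = Fm lam w n := by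
    intro n
    induction n with
    | zero => intro _; rfl
    | succ n ih =>
        intro hn
        have hnN : n < N := hn
        rw [ih (Nat.le_of_succ_le hn)]
        exact (Fm_step lam w hpart hl ⟨n, hnN⟩).symm
  rw [h0, hdet, chain N le_rfl]
end

section
/- Let N ≥ 2, fix reals x_1^1 < x_1^2 < … < x_1^N, and let f be a function of the N variables (x_1^N, …, x_N^N) that is antisymmetric under permutation of its arguments. Set D = { (x_l^k)_{2≤l≤k≤N} : x_l^k < x_l^{k+1} and x_l^k ≤ x_{l−1}^{k−1} } and D' = { (x_l^k)_{2≤l≤k≤N} : x_l^k ≤ x_{l−1}^{k−1} }, where in these constraints x_1^k denote the fixed values. If f is absolutely integrable over D' in the variables (x_l^k)_{2≤l≤k≤N}, then ∫_{D} f(x_1^N, …, x_N^N) Π_{2≤l≤k≤N} dx_l^k = ∫_{D'} f(x_1^N, …, x_N^N) Π_{2≤l≤k≤N} dx_l^k. -/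
open MeasureTheory

/-- Index type for the integration variables `x_l^k`, `2 ≤ l ≤ k ≤ N` (`0`-based:
`p = (k, l)` with `1 ≤ l ≤ k ≤ N - 1`). -/
abbrev TriIdx (N : ℕ) := {p : Fin N × Fin N // 1 ≤ (p.2 : ℕ) ∧ (p.2 : ℕ) ≤ (p.1 : ℕ)}

/-- The full triangular array: entry `x_{l+1}^{k+1}` (in `1`-based labels) is the
integration variable `y (k, l)` when `1 ≤ l ≤ k < N`, and the fixed value `c k`
(`= x_1^{k+1}`) when `l = 0`. -/
noncomputable def triArr (N : ℕ) (c : ℕ → ℝ) (y : TriIdx N → ℝ) (k l : ℕ) : ℝ :=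
  if h : k < N ∧ 1 ≤ l ∧ l ≤ k then
    y ⟨(⟨k, h.1⟩, ⟨l, lt_of_le_of_lt h.2.2 h.1⟩), h.2⟩
  else c k

/-- The region `D' = {x_l^k ≤ x_{l-1}^{k-1}}`. -/
def regionD' (N : ℕ) (c : ℕ → ℝ) : Set (TriIdx N → ℝ) :=
  {y | ∀ k l : ℕ, 1 ≤ l → l ≤ k → k < N →
    triArr N c y k l ≤ triArr N c y (k - 1) (l - 1)}

/-- The region `D = {x_l^k < x_l^{k+1} and x_l^k ≤ x_{l-1}^{k-1}}`. -/
def regionD (N : ℕ) (c : ℕ → ℝ) : Set (TriIdx N → ℝ) :=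
  {y | ∀ k l : ℕ, 1 ≤ l → l ≤ k → k < N →
    triArr N c y k l ≤ triArr N c y (k - 1) (l - 1) ∧
      (k + 1 < N → triArr N c y k l < triArr N c y (k + 1) l)}

namespace AntiSwap
variable {N : ℕ}
def swapIdx (N t l : ℕ) (p : TriIdx N) : TriIdx N :=
  if h1 : 1 ≤ l ∧ t + l + 1 ≤ (p.1.1 : ℕ) ∧ (p.1.2 : ℕ) + t = (p.1.1 : ℕ) then
    ⟨(p.1.1, ⟨(p.1.2 : ℕ) - 1, by omega⟩), by
      have := p.2; have := p.1.1.isLt; constructor <;> simp <;> omega⟩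
  else if h2 : 1 ≤ l ∧ t + l + 1 ≤ (p.1.1 : ℕ) ∧ (p.1.2 : ℕ) + t + 1 = (p.1.1 : ℕ) then
    ⟨(p.1.1, ⟨(p.1.2 : ℕ) + 1, by have := p.1.1.isLt; omega⟩), by
      have := p.2; constructor <;> simp <;> omega⟩
  else p


lemma swapIdx_involutive (t l : ℕ) : Function.Involutive (swapIdx N t l) := by
  intro p
  unfold swapIdx
  split_ifs with h1 h2 h3 h4 h5 h6 <;>
    first
      | (exfalso; simp_all; omega)
      | rfl
      | (apply Subtype.ext; apply Prod.ext <;> simp_all <;> (apply Fin.ext; simp; omega))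

/-- target of `(k,m)` under the swap, on raw indices -/
def swapNat (t l k m : ℕ) : ℕ :=
  if 1 ≤ l ∧ t + l + 1 ≤ k ∧ m + t = k then m - 1
  else if 1 ≤ l ∧ t + l + 1 ≤ k ∧ m + t + 1 = k then m + 1
  else m

lemma triArr_swap (c : ℕ → ℝ) (t l : ℕ) (y : TriIdx N → ℝ) (k m : ℕ) :
    triArr N c (fun p => y (swapIdx N t l p)) k m = triArr N c y k (swapNat t l k m) := by
  by_cases h : k < N ∧ 1 ≤ m ∧ m ≤ k
  · rw [triArr, dif_pos h]
    show y (swapIdx N t l ⟨(⟨k, h.1⟩, ⟨m, lt_of_le_of_lt h.2.2 h.1⟩), h.2⟩) = _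
    by_cases hc1 : 1 ≤ l ∧ t + l + 1 ≤ k ∧ m + t = k
    · rw [swapIdx, dif_pos (by simpa using hc1), swapNat, if_pos hc1, triArr,
        dif_pos (show k < N ∧ 1 ≤ m - 1 ∧ m - 1 ≤ k by omega)]
    · by_cases hc2 : 1 ≤ l ∧ t + l + 1 ≤ k ∧ m + t + 1 = k
      · rw [swapIdx, dif_neg (by simpa using hc1), dif_pos (by simpa using hc2), swapNat,
          if_neg hc1, if_pos hc2, triArr,
          dif_pos (show k < N ∧ 1 ≤ m + 1 ∧ m + 1 ≤ k by omega)]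
      · rw [swapIdx, dif_neg (by simpa using hc1), dif_neg (by simpa using hc2), swapNat,
          if_neg hc1, if_neg hc2, triArr, dif_pos h]
  · rw [triArr, dif_neg h, triArr, dif_neg (by rw [swapNat]; split_ifs <;> omega)]

def viol (N : ℕ) (c : ℕ → ℝ) (y : TriIdx N → ℝ) (t l : ℕ) : Prop :=
  1 ≤ l ∧ t + l + 1 < N ∧ triArr N c y (t + l + 1) l ≤ triArr N c y (t + l) l

def piece (N : ℕ) (c : ℕ → ℝ) (n : ℕ) : Set (TriIdx N → ℝ) :=
  {y | y ∈ regionD' N c ∧ viol N c y (n % N) (n / N) ∧ ∀ m < n, ¬ viol N c y (m % N) (m / N)}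

lemma lex_helper {N t t' l l' : ℕ} (ht : t < N) (hlt : N * l' + t' < N * l + t) :
    l' < l ∨ (l' = l ∧ t' < t) := by
  rcases Nat.lt_trichotomy l' l with h | h | h
  · exact Or.inl h
  · exact Or.inr ⟨h, by subst h; omega⟩
  · have h2 := Nat.mul_le_mul_left N h
    rw [Nat.mul_succ] at h2
    omega

lemma piece_swap_mem (c : ℕ → ℝ) (hc : ∀ k, k + 1 < N → c k < c (k + 1)) {n : ℕ}
    {y : TriIdx N → ℝ} (hy : y ∈ piece N c n) :
    (fun p => y (swapIdx N (n % N) (n / N) p)) ∈ piece N c n := by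
  obtain ⟨hD', hviol, hmin⟩ := hy
  set t := n % N with htdef
  set l := n / N with hldef
  obtain ⟨hl, hg, hle⟩ := hviol
  have hN0 : 0 < N := by omega
  have ht : t < N := Nat.mod_lt n hN0
  have hn : N * l + t = n := Nat.div_add_mod n N
  -- the key strict inequality at depth l - 1
  have hkey : triArr N c y (t + l - 1) (l - 1) < triArr N c y (t + l) (l - 1) := by
    rcases Nat.lt_or_ge l 2 with h2 | h2
    · -- l = 1 : both sides are fixed values
      have e : l = 1 := by omega
      rw [e, show t + 1 - 1 = t from by omega]
      rw [triArr, dif_neg (by omega), triArr, dif_neg (by omega)]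
      exact hc t (by omega)
    · have hmn : N * (l - 1) + t < n := by
        have : N * (l - 1) + N ≤ N * l := by
          rw [← Nat.mul_succ]; exact Nat.mul_le_mul_left N (by omega)
        omega
      have hmod : (N * (l - 1) + t) % N = t := by
        rw [Nat.mul_add_mod]; exact Nat.mod_eq_of_lt ht
      have hdiv : (N * (l - 1) + t) / N = l - 1 := by
        rw [Nat.mul_add_div hN0, Nat.div_eq_of_lt ht, Nat.add_zero]
      have := hmin _ hmn
      rw [hmod, hdiv] at this
      have hnotle : ¬ triArr N c y (t + (l - 1) + 1) (l - 1) ≤ triArr N c y (t + (l - 1)) (l - 1) := by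
        intro hle'
        exact this ⟨by omega, by omega, hle'⟩
      rw [show t + (l - 1) + 1 = t + l from by omega, show t + (l - 1) = t + l - 1 from by omega]
        at hnotle
      exact lt_of_not_ge hnotle
  refine ⟨?_, ⟨hl, hg, ?_⟩, ?_⟩
  · -- y' ∈ regionD'
    intro k m hm1 hmk hkN
    rw [triArr_swap, triArr_swap]
    unfold swapNat
    split_ifs with hA1 hB1 hB2 hB1' hB2' hA2 hB1'' hB2'' hB1''' hB2'''
    -- A1, B1
    · have h := hD' k (m - 1) (by omega) (by omega) hkN
      exact h
    -- A1, ¬B1, B2 : impossible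
    · omega
    -- A1, ¬B1, ¬B2 : the violation itself
    · have e1 : k = t + l + 1 := by omega
      have e2 : m - 1 = l := by omega
      rw [e1, e2, show t + l + 1 - 1 = t + l from by omega]
      exact hle
    -- ¬A1, A2, B1 : impossible
    · omega
    -- ¬A1, A2, ¬B1, B2
    · have h := hD' k (m + 1) (by omega) (by omega) hkN
      rw [show m - 1 + 1 = m + 1 - 1 from by omega]
      exact h
    -- ¬A1, A2, ¬B1, ¬B2 : three-step chain
    · have e1 : k = t + l + 1 := by omega
      have e2 : m = l := by omega
      have h1 := hD' k (m + 1) (by omega) (by omega) hkN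
      have h2 := hD' (k - 1) m (by omega) (by omega) (by omega)
      rw [e1, e2] at h1 h2 ⊢
      rw [show t + l + 1 - 1 = t + l from by omega] at h1 h2 ⊢
      rw [show l + 1 - 1 = l from by omega] at h1
      exact le_trans h1 (le_trans h2 (le_of_lt hkey))
    -- ¬A1, ¬A2, B1 : impossible
    · omega
    -- ¬A1, ¬A2, ¬B1, B2 : impossible
    · omega
    -- ¬A1, ¬A2, ¬B1, ¬B2
    · exact hD' k m hm1 hmk hkN
  · -- violation at (t, l) persists
    rw [triArr_swap, triArr_swap]
    rw [show swapNat t l (t + l + 1) l = l + 1 from by unfold swapNat; split_ifs <;> omega,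
      show swapNat t l (t + l) l = l from by unfold swapNat; split_ifs <;> omega]
    have h := hD' (t + l + 1) (l + 1) (by omega) (by omega) (by omega)
    rw [show t + l + 1 - 1 = t + l from by omega, show l + 1 - 1 = l from by omega] at h
    exact h
  · -- minimality persists
    intro m hm hv'
    have ht' : m % N < N := Nat.mod_lt m hN0
    have hm' : N * (m / N) + m % N = m := Nat.div_add_mod m N
    have hlex : m / N < l ∨ (m / N = l ∧ m % N < t) := lex_helper ht (N := N) (t := t) (t' := m % N) (l := l) (l' := m / N) (by omega)
    obtain ⟨hl', hg', hle'⟩ := hv'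
    rw [triArr_swap, triArr_swap] at hle'
    rw [show swapNat t l (m % N + m / N + 1) (m / N) = m / N from
        by unfold swapNat; split_ifs <;> omega,
      show swapNat t l (m % N + m / N) (m / N) = m / N from
        by unfold swapNat; split_ifs <;> omega] at hle'
    exact hmin m hm ⟨hl', hg', hle'⟩

lemma measurable_triArr (c : ℕ → ℝ) (k l : ℕ) :
    Measurable fun y : TriIdx N → ℝ => triArr N c y k l := by
  unfold triArr; split
  · exact measurable_pi_apply _
  · exact measurable_const

lemma measurableSet_regionD' (c : ℕ → ℝ) : MeasurableSet (regionD' N c) := by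
  have h : regionD' N c = ⋂ (k : ℕ), ⋂ (l : ℕ),
      {y : TriIdx N → ℝ | 1 ≤ l → l ≤ k → k < N →
        triArr N c y k l ≤ triArr N c y (k - 1) (l - 1)} := by
    ext y; simp only [regionD', Set.mem_setOf_eq, Set.mem_iInter]
  rw [h]
  refine MeasurableSet.iInter fun k => MeasurableSet.iInter fun l => ?_
  by_cases hg : 1 ≤ l ∧ l ≤ k ∧ k < N
  · have e : {y : TriIdx N → ℝ | 1 ≤ l → l ≤ k → k < N →
        triArr N c y k l ≤ triArr N c y (k - 1) (l - 1)} =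
        {y : TriIdx N → ℝ | triArr N c y k l ≤ triArr N c y (k - 1) (l - 1)} := by
      ext y; simp [hg.1, hg.2.1, hg.2.2]
    rw [e]; exact measurableSet_le (measurable_triArr _ _ _) (measurable_triArr _ _ _)
  · have e : {y : TriIdx N → ℝ | 1 ≤ l → l ≤ k → k < N →
        triArr N c y k l ≤ triArr N c y (k - 1) (l - 1)} = Set.univ :=
      Set.eq_univ_of_forall fun y h1 h2 h3 => absurd ⟨h1, h2, h3⟩ hg
    rw [e]; exact MeasurableSet.univ

lemma measurableSet_regionD (c : ℕ → ℝ) : MeasurableSet (regionD N c) := by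
  have h : regionD N c = ⋂ (k : ℕ), ⋂ (l : ℕ),
      {y : TriIdx N → ℝ | 1 ≤ l → l ≤ k → k < N →
        (triArr N c y k l ≤ triArr N c y (k - 1) (l - 1) ∧
          (k + 1 < N → triArr N c y k l < triArr N c y (k + 1) l))} := by
    ext y; simp only [regionD, Set.mem_setOf_eq, Set.mem_iInter]
  rw [h]
  refine MeasurableSet.iInter fun k => MeasurableSet.iInter fun l => ?_
  by_cases hg : 1 ≤ l ∧ l ≤ k ∧ k < N
  · have e : {y : TriIdx N → ℝ | 1 ≤ l → l ≤ k → k < N →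
        (triArr N c y k l ≤ triArr N c y (k - 1) (l - 1) ∧
          (k + 1 < N → triArr N c y k l < triArr N c y (k + 1) l))} =
        {y : TriIdx N → ℝ | triArr N c y k l ≤ triArr N c y (k - 1) (l - 1)} ∩
        {y : TriIdx N → ℝ | k + 1 < N → triArr N c y k l < triArr N c y (k + 1) l} := by
      ext y; simp [hg.1, hg.2.1, hg.2.2]
    rw [e]
    refine (measurableSet_le (measurable_triArr _ _ _) (measurable_triArr _ _ _)).inter ?_
    by_cases hg2 : k + 1 < N
    · have e2 : {y : TriIdx N → ℝ | k + 1 < N → triArr N c y k l < triArr N c y (k + 1) l} =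
          {y : TriIdx N → ℝ | triArr N c y k l < triArr N c y (k + 1) l} := by
        ext y; simp [hg2]
      rw [e2]; exact measurableSet_lt (measurable_triArr _ _ _) (measurable_triArr _ _ _)
    · have e2 : {y : TriIdx N → ℝ | k + 1 < N → triArr N c y k l < triArr N c y (k + 1) l} =
          Set.univ := Set.eq_univ_of_forall fun y h1 => absurd h1 hg2
      rw [e2]; exact MeasurableSet.univ
  · have e : {y : TriIdx N → ℝ | 1 ≤ l → l ≤ k → k < N →
        (triArr N c y k l ≤ triArr N c y (k - 1) (l - 1) ∧
          (k + 1 < N → triArr N c y k l < triArr N c y (k + 1) l))} = Set.univ :=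
      Set.eq_univ_of_forall fun y h1 h2 h3 => absurd ⟨h1, h2, h3⟩ hg
    rw [e]; exact MeasurableSet.univ

lemma measurableSet_violSet (c : ℕ → ℝ) (t l : ℕ) :
    MeasurableSet {y : TriIdx N → ℝ | viol N c y t l} := by
  by_cases hg : 1 ≤ l ∧ t + l + 1 < N
  · have e : {y : TriIdx N → ℝ | viol N c y t l} =
        {y : TriIdx N → ℝ | triArr N c y (t + l + 1) l ≤ triArr N c y (t + l) l} := by
      ext y; simp [viol, hg.1, hg.2]
    rw [e]; exact measurableSet_le (measurable_triArr _ _ _) (measurable_triArr _ _ _)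
  · have e : {y : TriIdx N → ℝ | viol N c y t l} = ∅ := by
      ext y
      simp only [Set.mem_setOf_eq, Set.mem_empty_iff_false, iff_false]
      exact fun hv => hg ⟨hv.1, hv.2.1⟩
    rw [e]; exact MeasurableSet.empty

lemma measurableSet_piece (c : ℕ → ℝ) (n : ℕ) : MeasurableSet (piece N c n) := by
  have h : piece N c n = (regionD' N c ∩ {y | viol N c y (n % N) (n / N)}) ∩
      ⋂ (m : ℕ), {y : TriIdx N → ℝ | m < n → ¬ viol N c y (m % N) (m / N)} := by
    ext y
    simp only [piece, Set.mem_setOf_eq, Set.mem_inter_iff, Set.mem_iInter]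
    tauto
  rw [h]
  refine ((measurableSet_regionD' c).inter (measurableSet_violSet c _ _)).inter
    (MeasurableSet.iInter fun m => ?_)
  by_cases hm : m < n
  · have e : {y : TriIdx N → ℝ | m < n → ¬ viol N c y (m % N) (m / N)} =
        {y : TriIdx N → ℝ | viol N c y (m % N) (m / N)}ᶜ := by
      ext y; simp [hm]
    rw [e]; exact (measurableSet_violSet c _ _).compl
  · have e : {y : TriIdx N → ℝ | m < n → ¬ viol N c y (m % N) (m / N)} = Set.univ :=
      Set.eq_univ_of_forall fun y h1 => absurd h1 hm
    rw [e]; exact MeasurableSet.univ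

/-- The swap as a measurable equivalence of the coordinate space. -/
noncomputable def swapEquivM (N t l : ℕ) : (TriIdx N → ℝ) ≃ᵐ (TriIdx N → ℝ) :=
  (MeasurableEquiv.piCongrLeft (fun _ => ℝ)
    (Function.Involutive.toPerm _ (swapIdx_involutive (N := N) t l))).symm

lemma swapEquivM_apply (t l : ℕ) (y : TriIdx N → ℝ) :
    swapEquivM N t l y = fun p => y (swapIdx N t l p) := by
  funext p
  simp [swapEquivM, MeasurableEquiv.piCongrLeft, Function.Involutive.toPerm]

lemma measurePreserving_swapEquivM (t l : ℕ) :
    MeasurePreserving (swapEquivM N t l) volume volume :=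
  (volume_measurePreserving_piCongrLeft (fun _ : TriIdx N => ℝ)
    (Function.Involutive.toPerm _ (swapIdx_involutive (N := N) t l))).symm _

lemma bottom_comp_swap (c : ℕ → ℝ) {t l : ℕ} (hl : 1 ≤ l) (hg : t + l + 1 < N)
    (y : TriIdx N → ℝ) :
    (fun j : Fin N => triArr N c (fun p => y (swapIdx N t l p)) (N - 1) (j : ℕ)) =
      (fun j : Fin N => triArr N c y (N - 1) (j : ℕ)) ∘
        (Equiv.swap (⟨N - 1 - t, by omega⟩ : Fin N) ⟨N - 2 - t, by omega⟩) := by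
  funext j
  have hjN := j.isLt
  show triArr N c _ (N - 1) (j : ℕ) =
    triArr N c y (N - 1) ((Equiv.swap (⟨N - 1 - t, by omega⟩ : Fin N) ⟨N - 2 - t, by omega⟩ j : Fin N) : ℕ)
  rw [triArr_swap, Equiv.swap_apply_def]
  by_cases h1 : (j : ℕ) = N - 1 - t
  · rw [if_pos (Fin.ext (by simpa using h1))]
    congr 1
    unfold swapNat; split_ifs <;> simp <;> omega
  · rw [if_neg (fun he => h1 (by simpa using congrArg Fin.val he))]
    by_cases h2 : (j : ℕ) = N - 2 - t
    · rw [if_pos (Fin.ext (by simpa using h2))]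
      congr 1
      unfold swapNat; split_ifs <;> simp <;> omega
    · rw [if_neg (fun he => h2 (by simpa using congrArg Fin.val he))]
      congr 1
      unfold swapNat; split_ifs <;> omega

lemma integral_piece_eq_zero (c : ℕ → ℝ) (hc : ∀ k, k + 1 < N → c k < c (k + 1))
    (f : (Fin N → ℝ) → ℝ)
    (hanti : ∀ σ : Equiv.Perm (Fin N), ∀ v : Fin N → ℝ,
      f (v ∘ σ) = ((Equiv.Perm.sign σ : ℤ) : ℝ) * f v)
    (n : ℕ)
    (hint : IntegrableOn (fun y : TriIdx N → ℝ => f (fun j : Fin N => triArr N c y (N - 1) (j : ℕ)))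
      (piece N c n) volume) :
    ∫ y in piece N c n, f (fun j : Fin N => triArr N c y (N - 1) (j : ℕ)) = 0 := by
  set g : (TriIdx N → ℝ) → ℝ := fun y => f (fun j : Fin N => triArr N c y (N - 1) (j : ℕ)) with hg
  by_cases hguard : 1 ≤ n / N ∧ (n % N) + n / N + 1 < N
  · obtain ⟨hl, hgN⟩ := hguard
    set t := n % N
    set l := n / N
    set T := swapEquivM N t l with hT
    set S := piece N c n with hS
    have hTapp : ∀ y : TriIdx N → ℝ, T y = fun p => y (swapIdx N t l p) :=
      swapEquivM_apply t l
    have hTT : ∀ y : TriIdx N → ℝ, T (T y) = y := by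
      intro y
      rw [hTapp, hTapp]
      funext p
      exact congrArg y (swapIdx_involutive t l p)
    have hclosed : ∀ y ∈ S, T y ∈ S := by
      intro y hy
      rw [hTapp]
      exact piece_swap_mem c hc hy
    have hTS : T ⁻¹' S = S := by
      ext y
      constructor
      · intro hy
        have := hclosed _ hy
        rwa [hTT] at this
      · exact fun hy => hclosed y hy
    have hSm : MeasurableSet S := measurableSet_piece c n
    have h1 : ∫ y in S, g (T y) = ∫ y in S, g y := by
      have := (measurePreserving_swapEquivM (N := N) t l).setIntegral_preimage_emb
        (MeasurableEquiv.measurableEmbedding _) g S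
      rwa [hTS] at this
    have hab : (⟨N - 1 - t, by omega⟩ : Fin N) ≠ ⟨N - 2 - t, by omega⟩ := by
      intro he
      have := congrArg Fin.val he
      simp at this
      omega
    have h2 : ∀ y ∈ S, g (T y) = - g y := by
      intro y _
      rw [hTapp, hg]
      show f _ = - f _
      rw [bottom_comp_swap c hl hgN y, hanti, Equiv.Perm.sign_swap hab]
      norm_num
    have h3 : ∫ y in S, g (T y) = - ∫ y in S, g y := by
      rw [setIntegral_congr_fun hSm h2, integral_neg]
    have h4 : ∫ y in S, g y = 0 := by linarith [h1, h3]
    exact h4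
  · have he : piece N c n = ∅ := by
      ext y
      simp only [piece, Set.mem_setOf_eq, Set.mem_empty_iff_false, iff_false]
      rintro ⟨-, ⟨hv1, hv2, -⟩, -⟩
      exact hguard ⟨hv1, hv2⟩
    rw [he]
    simp

lemma piece_disjoint (c : ℕ → ℝ) {n n' : ℕ} (h : n ≠ n') :
    Disjoint (piece N c n) (piece N c n') := by
  rcases Nat.lt_or_ge n n' with h' | h'
  · exact Set.disjoint_left.2 fun y hy hy' => hy'.2.2 n h' hy.2.1
  · exact Set.disjoint_left.2 fun y hy hy' => hy.2.2 n' (by omega) hy'.2.1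

lemma piece_subset (c : ℕ → ℝ) (n : ℕ) : piece N c n ⊆ regionD' N c := fun _ hy => hy.1

lemma union_pieces (c : ℕ → ℝ) :
    regionD' N c \ regionD N c = ⋃ n ∈ Finset.range (N * N), piece N c n := by
  classical
  ext y
  simp only [Set.mem_diff, Set.mem_iUnion, Finset.mem_range, exists_prop]
  constructor
  · rintro ⟨hD', hnD⟩
    simp only [regionD, Set.mem_setOf_eq] at hnD
    push_neg at hnD
    obtain ⟨k, l, h1, h2, h3, h4⟩ := hnD
    obtain ⟨hkN, hle⟩ := h4 (hD' k l h1 h2 h3)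
    have hviolm : viol N c y ((N * l + (k - l)) % N) ((N * l + (k - l)) / N) := by
      rw [Nat.mul_add_mod, Nat.mod_eq_of_lt (by omega), Nat.mul_add_div (by omega),
        Nat.div_eq_of_lt (by omega), Nat.add_zero]
      refine ⟨h1, by omega, ?_⟩
      rw [show k - l + l + 1 = k + 1 from by omega, show k - l + l = k from by omega]
      exact hle
    have hex : ∃ m, viol N c y (m % N) (m / N) := ⟨_, hviolm⟩
    refine ⟨Nat.find hex, ?_, hD', Nat.find_spec hex, fun m hm => Nat.find_min hex hm⟩
    have hb : N * l + (k - l) < N * N := by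
      have h5 : N * (l + 1) ≤ N * N := Nat.mul_le_mul_left N (by omega)
      rw [Nat.mul_add, Nat.mul_one] at h5
      omega
    exact lt_of_le_of_lt (Nat.find_min' hex hviolm) hb
  · rintro ⟨n, _, hD', hviol, _⟩
    refine ⟨hD', fun hD => ?_⟩
    obtain ⟨hl, hgN, hle⟩ := hviol
    have := (hD (n % N + n / N) (n / N) hl (by omega) (by omega)).2 (by omega)
    exact absurd hle (not_le.2 this)

end AntiSwap

/-- for an antisymmetric function `f` of the bottom row
`(x_1^N, …, x_N^N)` (with `x_1^1 < … < x_1^N` fixed), the integrals of `f` over the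
regions `D` and `D'` coincide. -/
theorem antisym_integral_region_swap (N : ℕ) (hN : 2 ≤ N) (c : ℕ → ℝ)
    (hc : ∀ k : ℕ, k + 1 < N → c k < c (k + 1))
    (f : (Fin N → ℝ) → ℝ)
    (hanti : ∀ σ : Equiv.Perm (Fin N), ∀ v : Fin N → ℝ,
      f (v ∘ σ) = ((Equiv.Perm.sign σ : ℤ) : ℝ) * f v)
    (hint : IntegrableOn
      (fun y : TriIdx N → ℝ => f (fun j : Fin N => triArr N c y (N - 1) (j : ℕ)))
      (regionD' N c) volume) :
    ∫ y in regionD N c, f (fun j : Fin N => triArr N c y (N - 1) (j : ℕ)) =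
      ∫ y in regionD' N c, f (fun j : Fin N => triArr N c y (N - 1) (j : ℕ)) := by
    classical
  set g : (TriIdx N → ℝ) → ℝ := fun y => f (fun j : Fin N => triArr N c y (N - 1) (j : ℕ))
    with hg
  have hsub : regionD N c ⊆ regionD' N c := fun y hy k l h1 h2 h3 => (hy k l h1 h2 h3).1
  have hDm := AntiSwap.measurableSet_regionD (N := N) c
  have hD'm := AntiSwap.measurableSet_regionD' (N := N) c
  have hintD : IntegrableOn g (regionD N c) volume := hint.mono_set hsub
  have hintE : IntegrableOn g (regionD' N c \ regionD N c) volume :=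
    hint.mono_set Set.diff_subset
  have hsplit : ∫ y in regionD' N c, g y =
      (∫ y in regionD N c, g y) + ∫ y in regionD' N c \ regionD N c, g y := by
    rw [← setIntegral_union (Set.disjoint_sdiff_right) (hD'm.diff hDm) hintD hintE,
      Set.union_diff_cancel hsub]
  have hEzero : ∫ y in regionD' N c \ regionD N c, g y = 0 := by
    rw [AntiSwap.union_pieces c,
      integral_biUnion_finset (Finset.range (N * N))
        (fun n _ => AntiSwap.measurableSet_piece c n)
        (fun n _ m _ hnm => AntiSwap.piece_disjoint c hnm)
        (fun n _ => hint.mono_set (AntiSwap.piece_subset c n))]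
    exact Finset.sum_eq_zero fun n _ =>
      AntiSwap.integral_piece_eq_zero c hc f hanti n
        (hint.mono_set (AntiSwap.piece_subset c n))
  rw [hsplit, hEzero, add_zero]
end

section
/- Bound on the rescaled binomial kernel: fix reals r_1 < r_2. There exist t_0 > 0 and C > 0 such that for all t > t_0 and all s_1, s_2 ∈ ℝ, with n_i = ⌊t + 2t^{2/3} r_i⌋ and ξ_i = 2t + 2t^{2/3} r_i + t^{1/3} s_i (i = 1, 2), one has t^{1/3} e^{ξ_1 − ξ_2} φ_{n_1,n_2}(ξ_1, ξ_2) ≤ C e^{−|s_1 − s_2|}. -/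
/-- `φ_{n₁,n₂}(ξ₁,ξ₂) = (ξ₂-ξ₁)^{n₂-n₁-1}/(n₂-n₁-1)! · 1_{ξ₁ ≤ ξ₂}` for `n₁ < n₂`. -/
noncomputable def phiKer (n₁ n₂ : ℤ) (ξ₁ ξ₂ : ℝ) : ℝ :=
  if ξ₁ ≤ ξ₂ then
    (ξ₂ - ξ₁) ^ (n₂ - n₁ - 1).toNat / (Nat.factorial (n₂ - n₁ - 1).toNat)
  else 0

/-- Stirling-type lower bound for the factorial. -/
lemma fact_lb (m : ℕ) (hm : 1 ≤ m) :
    Real.sqrt m * ((m : ℝ) / Real.exp 1) ^ m ≤ (Nat.factorial m : ℝ) := by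
  obtain ⟨n, rfl⟩ : ∃ n, m = n + 1 := ⟨m - 1, (Nat.succ_pred_eq_of_pos hm).symm⟩
  have htend : Filter.Tendsto (Stirling.stirlingSeq ∘ Nat.succ) Filter.atTop
      (nhds (Real.sqrt Real.pi)) :=
    Stirling.tendsto_stirlingSeq_sqrt_pi.comp (Filter.tendsto_add_atTop_nat 1)
  have hs : Real.sqrt Real.pi ≤ Stirling.stirlingSeq (n + 1) :=
    Stirling.stirlingSeq'_antitone.le_of_tendsto htend n
  have hD : (0 : ℝ) < Real.sqrt (2 * (n + 1 : ℕ)) * (((n + 1 : ℕ) : ℝ) / Real.exp 1) ^ (n + 1) := by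
    have : (0:ℝ) < ((n+1 : ℕ) : ℝ) := by positivity
    positivity
  rw [Stirling.stirlingSeq, le_div_iff₀ hD] at hs
  refine le_trans ?_ hs
  have h1 : (1 : ℝ) ≤ Real.sqrt Real.pi := by
    rw [show (1:ℝ) = Real.sqrt 1 by simp]
    exact Real.sqrt_le_sqrt (by nlinarith [Real.pi_gt_three])
  have h2 : Real.sqrt ((n + 1 : ℕ) : ℝ) ≤ Real.sqrt Real.pi * Real.sqrt (2 * (n + 1 : ℕ)) := by
    calc Real.sqrt ((n + 1 : ℕ) : ℝ) ≤ Real.sqrt (2 * (n + 1 : ℕ)) := by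
          apply Real.sqrt_le_sqrt; push_cast; nlinarith [Nat.cast_nonneg (α := ℝ) n]
      _ = 1 * Real.sqrt (2 * (n + 1 : ℕ)) := (one_mul _).symm
      _ ≤ Real.sqrt Real.pi * Real.sqrt (2 * (n + 1 : ℕ)) := by
          apply mul_le_mul_of_nonneg_right h1 (Real.sqrt_nonneg _)
  calc Real.sqrt ((n + 1 : ℕ) : ℝ) * (((n + 1 : ℕ) : ℝ) / Real.exp 1) ^ (n + 1)
      ≤ (Real.sqrt Real.pi * Real.sqrt (2 * (n + 1 : ℕ))) *
        (((n + 1 : ℕ) : ℝ) / Real.exp 1) ^ (n + 1) := by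
        apply mul_le_mul_of_nonneg_right h2
        have : (0:ℝ) < ((n+1 : ℕ) : ℝ) := by positivity
        positivity
    _ = Real.sqrt Real.pi * (Real.sqrt (2 * (n + 1 : ℕ)) *
        (((n + 1 : ℕ) : ℝ) / Real.exp 1) ^ (n + 1)) := by ring

/-- Tilted Poisson bound. -/
lemma poisson_bound (m : ℕ) (hm : 1 ≤ m) (x θ : ℝ) (hx : 0 ≤ x) :
    Real.exp (-x) * x ^ m / (Nat.factorial m : ℝ) ≤
      Real.exp ((Real.exp θ - 1) * x - m * θ) / Real.sqrt m := by
  have hmpos : (0 : ℝ) < (m : ℝ) := by exact_mod_cast hm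
  have hsm : (0 : ℝ) < Real.sqrt m := Real.sqrt_pos.mpr hmpos
  have hfacpos : (0 : ℝ) < (Nat.factorial m : ℝ) := by
    exact_mod_cast Nat.factorial_pos m
  -- Chernoff: x^m ≤ (m / e^θ)^m * exp (e^θ x - m)
  have hch : x ^ m ≤ ((m : ℝ) / Real.exp θ) ^ m * Real.exp (Real.exp θ * x - m) := by
    have hy : Real.exp θ * x / m ≤ Real.exp (Real.exp θ * x / m - 1) := by
      have := Real.add_one_le_exp (Real.exp θ * x / m - 1)
      linarith
    have hy0 : 0 ≤ Real.exp θ * x / m := by positivity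
    have hpow : (Real.exp θ * x / m) ^ m ≤ (Real.exp (Real.exp θ * x / m - 1)) ^ m :=
      pow_le_pow_left₀ hy0 hy m
    rw [← Real.exp_nat_mul] at hpow
    have hexpm : (m : ℝ) * (Real.exp θ * x / m - 1) = Real.exp θ * x - m := by
      field_simp
    rw [hexpm] at hpow
    have hne : ((m : ℝ) / Real.exp θ) ^ m * (Real.exp θ * x / m) ^ m = x ^ m := by
      rw [← mul_pow]
      rw [show (m : ℝ) / Real.exp θ * (Real.exp θ * x / m) = x by
        field_simp]
    calc x ^ m = ((m : ℝ) / Real.exp θ) ^ m * (Real.exp θ * x / m) ^ m := hne.symm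
      _ ≤ ((m : ℝ) / Real.exp θ) ^ m * Real.exp (Real.exp θ * x - m) := by
          apply mul_le_mul_of_nonneg_left hpow
          positivity
  have hfac := fact_lb m hm
  rw [div_le_div_iff₀ hfacpos hsm]
  have e1 : ((m : ℝ) / Real.exp θ) ^ m = (m : ℝ) ^ m * Real.exp (-((m : ℝ) * θ)) := by
    rw [div_pow, ← Real.exp_nat_mul, div_eq_mul_inv, ← Real.exp_neg]
  have e2 : ((m : ℝ) / Real.exp 1) ^ m = (m : ℝ) ^ m * Real.exp (-((m : ℝ) * 1)) := by
    rw [div_pow, ← Real.exp_nat_mul, div_eq_mul_inv, ← Real.exp_neg]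
  have l3 : Real.exp (-x) * Real.exp (-((m : ℝ) * θ)) * Real.exp (Real.exp θ * x - m)
      = Real.exp ((Real.exp θ - 1) * x - (m : ℝ) * θ) * Real.exp (-((m : ℝ) * 1)) := by
    rw [← Real.exp_add, ← Real.exp_add, ← Real.exp_add]
    congr 1
    ring
  calc Real.exp (-x) * x ^ m * Real.sqrt m
      ≤ Real.exp (-x) * (((m : ℝ) / Real.exp θ) ^ m * Real.exp (Real.exp θ * x - m)) *
          Real.sqrt m := by
        apply mul_le_mul_of_nonneg_right _ hsm.le
        apply mul_le_mul_of_nonneg_left hch (Real.exp_pos _).le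
    _ = Real.exp ((Real.exp θ - 1) * x - (m : ℝ) * θ) *
          (Real.sqrt m * ((m : ℝ) / Real.exp 1) ^ m) := by
        rw [e1, e2]
        linear_combination (Real.sqrt (m : ℝ) * (m : ℝ) ^ m) * l3
    _ ≤ Real.exp ((Real.exp θ - 1) * x - (m : ℝ) * θ) * (Nat.factorial m : ℝ) := by
        apply mul_le_mul_of_nonneg_left hfac (Real.exp_pos _).le

set_option maxHeartbeats 2000000 in
/-- bound on the rescaled binomial kernel: for fixed `r₁ < r₂` there are
`t₀ > 0` and `C > 0` such that for all `t > t₀` and `s₁, s₂ ∈ ℝ`, with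
`n_i = ⌊t + 2t^{2/3} r_i⌋` and `ξ_i = 2t + 2t^{2/3} r_i + t^{1/3} s_i`,
`t^{1/3} e^{ξ₁-ξ₂} φ_{n₁,n₂}(ξ₁,ξ₂) ≤ C e^{-|s₁-s₂|}`. -/
theorem phi_rescaled_bound (r₁ r₂ : ℝ) (h : r₁ < r₂) :
    ∃ t₀ C : ℝ, 0 < t₀ ∧ 0 < C ∧ ∀ t : ℝ, t₀ < t → ∀ s₁ s₂ : ℝ,
      t ^ ((1 : ℝ) / 3) *
        Real.exp ((2 * t + 2 * t ^ ((2 : ℝ) / 3) * r₁ + t ^ ((1 : ℝ) / 3) * s₁)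
          - (2 * t + 2 * t ^ ((2 : ℝ) / 3) * r₂ + t ^ ((1 : ℝ) / 3) * s₂)) *
        phiKer ⌊t + 2 * t ^ ((2 : ℝ) / 3) * r₁⌋ ⌊t + 2 * t ^ ((2 : ℝ) / 3) * r₂⌋
          (2 * t + 2 * t ^ ((2 : ℝ) / 3) * r₁ + t ^ ((1 : ℝ) / 3) * s₁)
          (2 * t + 2 * t ^ ((2 : ℝ) / 3) * r₂ + t ^ ((1 : ℝ) / 3) * s₂) ≤
        C * Real.exp (-|s₁ - s₂|) := by
  set δ := r₂ - r₁ with hδdef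
  have hδ : 0 < δ := sub_pos.mpr h
  clear_value δ
  refine ⟨64 + (2 / δ) ^ 3, Real.exp (8 * δ + 2) / Real.sqrt δ,
    by nlinarith [pow_pos (div_pos two_pos hδ) 3],
    div_pos (Real.exp_pos _) (Real.sqrt_pos.mpr hδ), ?_⟩
  intro t ht s₁ s₂
  have ht64 : (64 : ℝ) < t :=
    lt_of_le_of_lt (by nlinarith [pow_pos (div_pos two_pos hδ) 3]) ht
  have ht0 : (0 : ℝ) < t := by linarith
  have ht1 : (1 : ℝ) ≤ t := by linarith
  set q := t ^ ((2 : ℝ) / 3) with hq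
  set p := t ^ ((1 : ℝ) / 3) with hp
  have hp0 : 0 < p := Real.rpow_pos_of_pos ht0 _
  have hq0 : 0 < q := Real.rpow_pos_of_pos ht0 _
  have hpp : p * p = q := by rw [hp, hq, ← Real.rpow_add ht0]; norm_num
  have hp3 : p ^ 3 = t := by
    rw [hp, ← Real.rpow_natCast (t ^ ((1 : ℝ) / 3)) 3, ← Real.rpow_mul ht0.le]
    norm_num
  have hq3 : q ^ 3 = t ^ 2 := by
    rw [hq, ← Real.rpow_natCast (t ^ ((2 : ℝ) / 3)) 3, ← Real.rpow_mul ht0.le,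
      ← Real.rpow_natCast t 2]
    norm_num
  have hp4 : 4 ≤ p := by
    by_contra hc
    push_neg at hc
    have h1 : p ^ 3 < 4 ^ 3 := by
      apply pow_lt_pow_left₀ hc hp0.le
      norm_num
    rw [hp3] at h1
    norm_num at h1
    linarith
  have hqδ : 2 / δ ≤ q := by
    have h1 : (2 / δ) ^ 3 ≤ q ^ 3 := by
      rw [hq3]
      have ht2 : t ≤ t ^ 2 := by nlinarith
      linarith
    exact le_of_pow_le_pow_left₀ (by norm_num) hq0.le h1
  have ha4 : 4 ≤ 2 * q * δ := by
    have h2 : 2 ≤ q * δ := by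
      have := (div_le_iff₀ hδ).mp hqδ
      linarith
    linarith
  clear_value q p
  -- floor bounds
  have hf1 : (⌊t + 2 * q * r₁⌋ : ℝ) ≤ t + 2 * q * r₁ := Int.floor_le _
  have hf1' : t + 2 * q * r₁ - 1 < (⌊t + 2 * q * r₁⌋ : ℝ) := Int.sub_one_lt_floor _
  have hf2 : (⌊t + 2 * q * r₂⌋ : ℝ) ≤ t + 2 * q * r₂ := Int.floor_le _
  have hf2' : t + 2 * q * r₂ - 1 < (⌊t + 2 * q * r₂⌋ : ℝ) := Int.sub_one_lt_floor _
  set N : ℤ := ⌊t + 2 * q * r₂⌋ - ⌊t + 2 * q * r₁⌋ - 1 with hN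
  have hNcast : (N : ℝ) = (⌊t + 2 * q * r₂⌋ : ℝ) - (⌊t + 2 * q * r₁⌋ : ℝ) - 1 := by
    rw [hN]; push_cast; ring
  have hNlb : 2 * q * δ - 2 < (N : ℝ) := by
    rw [hδdef]
    linarith [hNcast, hf1, hf2']
  have hNub : (N : ℝ) ≤ 2 * q * δ := by
    rw [hδdef]
    linarith [hNcast, hf1', hf2]
  have hN1 : 1 ≤ N := by
    have : (1 : ℝ) ≤ (N : ℝ) := by linarith
    exact_mod_cast this
  have hN0 : 0 ≤ N := by omega
  have hmN : ((N.toNat : ℕ) : ℝ) = (N : ℝ) := by exact_mod_cast Int.toNat_of_nonneg hN0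
  have hm1 : 1 ≤ N.toNat := by omega
  set m := N.toNat with hm
  set ξ₁ := 2 * t + 2 * q * r₁ + p * s₁ with hξ₁
  set ξ₂ := 2 * t + 2 * q * r₂ + p * s₂ with hξ₂
  set Δ := s₂ - s₁ with hΔdef
  have hξ : ξ₂ - ξ₁ = 2 * q * δ + p * Δ := by rw [hξ₁, hξ₂, hδdef, hΔdef]; ring
  have habsΔ : |s₁ - s₂| = |Δ| := by rw [hΔdef, abs_sub_comm]
  clear_value ξ₁ ξ₂ Δ
  by_cases hle : ξ₁ ≤ ξ₂
  · rw [phiKer, if_pos hle]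
    have hx0 : (0 : ℝ) ≤ ξ₂ - ξ₁ := by linarith
    have hNm : (⌊t + 2 * q * r₂⌋ - ⌊t + 2 * q * r₁⌋ - 1).toNat = m := by rw [hm, hN]
    rw [hNm]
    clear_value N m
    set θ : ℝ := if 0 ≤ Δ then -(2 / p) else 2 / p with hθ
    have hθabs : |θ| = 2 / p := by
      rcases le_or_gt 0 Δ with h0 | h0
      · rw [hθ, if_pos h0, abs_neg, abs_of_nonneg (by positivity)]
      · rw [hθ, if_neg (not_le.mpr h0), abs_of_nonneg (by positivity)]
    have hθ1 : |θ| ≤ 1 := by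
      rw [hθabs]
      rw [div_le_one hp0]
      linarith
    have hθsq : θ ^ 2 = 4 / q := by
      have : θ ^ 2 = (2 / p) ^ 2 := by rw [hθ]; split_ifs <;> ring
      rw [this, div_pow, ← hpp]
      norm_num
      ring_nf
    have hθpΔ : θ * (p * Δ) = -(2 * |Δ|) := by
      rw [hθ]
      split_ifs with h0
      · rw [abs_of_nonneg h0]; field_simp
      · rw [abs_of_neg (not_le.mp h0)]; field_simp
    clear_value θ
    have hkey := poisson_bound m hm1 (ξ₂ - ξ₁) θ hx0
    -- exponent bound
    have hexp_est : Real.exp θ - 1 - θ ≤ 4 / q := by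
      have := Real.abs_exp_sub_one_sub_id_le hθ1
      rw [← hθsq]
      calc Real.exp θ - 1 - θ ≤ |Real.exp θ - 1 - θ| := le_abs_self _
        _ ≤ θ ^ 2 := this
    have hx_ub : ξ₂ - ξ₁ ≤ 2 * q * δ + p * |Δ| := by
      rw [hξ]
      have h' : p * Δ ≤ p * |Δ| := mul_le_mul_of_nonneg_left (le_abs_self Δ) hp0.le
      linarith
    have hmub : (m : ℝ) ≤ 2 * q * δ := by rw [hmN]; exact hNub
    have hmlb : 2 * q * δ - 2 < (m : ℝ) := by rw [hmN]; exact hNlb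
    have hE : (Real.exp θ - 1) * (ξ₂ - ξ₁) - (m : ℝ) * θ ≤ 8 * δ + 1 - |Δ| := by
      have hid : (Real.exp θ - 1) * (ξ₂ - ξ₁) - (m : ℝ) * θ
          = (Real.exp θ - 1 - θ) * (ξ₂ - ξ₁) + θ * (p * Δ) + θ * (2 * q * δ - (m : ℝ)) := by
        rw [hξ]; ring
      rw [hid, hθpΔ]
      have ht1' : (Real.exp θ - 1 - θ) * (ξ₂ - ξ₁) ≤ (4 / q) * (2 * q * δ + p * |Δ|) := by
        have ha : (Real.exp θ - 1 - θ) * (ξ₂ - ξ₁) ≤ (4 / q) * (ξ₂ - ξ₁) :=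
          mul_le_mul_of_nonneg_right hexp_est hx0
        have hb : (4 / q) * (ξ₂ - ξ₁) ≤ (4 / q) * (2 * q * δ + p * |Δ|) :=
          mul_le_mul_of_nonneg_left hx_ub (by positivity)
        linarith
      have ht1'' : (4 / q) * (2 * q * δ + p * |Δ|) ≤ 8 * δ + |Δ| := by
        have e1 : (4 / q) * (2 * q * δ) = 8 * δ := by field_simp; ring
        have e2 : (4 / q) * (p * |Δ|) = (4 / p) * |Δ| := by
          rw [← hpp]; field_simp
        have e3 : (4 / p) * |Δ| ≤ 1 * |Δ| := by
          apply mul_le_mul_of_nonneg_right _ (abs_nonneg _)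
          rw [div_le_one hp0]; linarith
        linarith [abs_nonneg Δ]
      have ht2 : θ * (2 * q * δ - (m : ℝ)) ≤ 1 := by
        have h1 : |θ * (2 * q * δ - (m : ℝ))| ≤ (2 / p) * 2 := by
          rw [abs_mul, hθabs]
          apply mul_le_mul_of_nonneg_left _ (by positivity)
          rw [abs_le]; constructor <;> linarith
        have h2 : (2 / p) * 2 ≤ 1 := by
          rw [div_mul_eq_mul_div, div_le_one hp0]; linarith
        calc θ * (2 * q * δ - (m : ℝ)) ≤ |θ * (2 * q * δ - (m : ℝ))| := le_abs_self _
          _ ≤ 1 := le_trans h1 h2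
      linarith
    -- sqrt m lower bound
    have hsqm : Real.sqrt δ * p ≤ Real.sqrt m := by
      have h1 : q * δ ≤ (m : ℝ) := by
        have h2 : 2 ≤ q * δ := by linarith
        linarith
      have h2 : Real.sqrt (q * δ) ≤ Real.sqrt m := Real.sqrt_le_sqrt h1
      have h3 : Real.sqrt (q * δ) = p * Real.sqrt δ := by
        rw [Real.sqrt_mul hq0.le, ← hpp, Real.sqrt_mul_self hp0.le]
      linarith [h2, h3.symm.le]
    have hsδp : (0 : ℝ) < Real.sqrt δ * p := by positivity
    have hsm0 : (0 : ℝ) < Real.sqrt (m : ℝ) := by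
      apply Real.sqrt_pos.mpr
      have : (0:ℝ) < (m:ℝ) := by linarith
      exact this
    calc p * Real.exp (ξ₁ - ξ₂) * ((ξ₂ - ξ₁) ^ m / (Nat.factorial m : ℝ))
        = p * (Real.exp (-(ξ₂ - ξ₁)) * (ξ₂ - ξ₁) ^ m / (Nat.factorial m : ℝ)) := by
          rw [show ξ₁ - ξ₂ = -(ξ₂ - ξ₁) by ring]; ring
      _ ≤ p * (Real.exp ((Real.exp θ - 1) * (ξ₂ - ξ₁) - (m : ℝ) * θ) / Real.sqrt m) := by
          apply mul_le_mul_of_nonneg_left hkey hp0.le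
      _ ≤ p * (Real.exp (8 * δ + 1 - |Δ|) / (Real.sqrt δ * p)) := by
          apply mul_le_mul_of_nonneg_left _ hp0.le
          apply div_le_div₀ (Real.exp_pos _).le (Real.exp_le_exp.mpr hE) hsδp hsqm
      _ = Real.exp (8 * δ + 1 - |Δ|) / Real.sqrt δ := by
          field_simp
      _ ≤ Real.exp (8 * δ + 2) / Real.sqrt δ * Real.exp (-|s₁ - s₂|) := by
          rw [habsΔ, div_mul_eq_mul_div, ← Real.exp_add]
          gcongr
          linarith
  · rw [phiKer, if_neg hle]
    rw [mul_zero]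
    positivity
end
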